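/- Positive formulas are preserved under backward silent steps and negative formulas under forward silent steps: if p →_τ p' then (1) for every positive HMLU formula φ, if p' ⊨ φ then p ⊨ φ; (2) for every negative HMLU formula φ, if p ⊨ φ then p' ⊨ φ. -/
import Mathlib


variable {X A : Type*}

/-- Formulas of Hennessy-Milner Logic with Until. `none` is the silent action τ. -/
inductive HMLU (A : Type*) where
  | top : HMLU A
  | neg : HMLU A → HMLU A
  | and : HMLU A → HMLU A → HMLU A
  | dia : HMLU A → Option A → HMLU A → HMLU A

/-- Satisfaction: `p ⊨ δ⟨α⟩ψ` iff there is a τ-path from `p` along which every state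
satisfies `δ`, ending in a state that `α`-steps to a state satisfying `ψ`. -/
def Sat (step : Option A → X → X → Prop) : HMLU A → X → Prop
  | .top, _ => True
  | .neg φ, p => ¬ Sat step φ p
  | .and φ ψ, p => Sat step φ p ∧ Sat step ψ p
  | .dia δ α ψ, p => ∃ p' p'', Sat step δ p ∧
      Relation.ReflTransGen (fun x y => step none x y ∧ Sat step δ y) p p' ∧
      step α p' p'' ∧ Sat step ψ p''

mutual
  /-- Positive HMLU formulas. -/
  inductive Positive : HMLU A → Prop
    | top : Positive .top
    | neg {φ : HMLU A} : Negative φ → Positive (.neg φ)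
    | and {φ ψ : HMLU A} : Positive φ → Positive ψ → Positive (.and φ ψ)
    | dia {δ ψ : HMLU A} {α : Option A} : Positive δ → Positive (.dia δ α ψ)
  /-- Negative HMLU formulas. -/
  inductive Negative : HMLU A → Prop
    | top : Negative .top
    | neg {φ : HMLU A} : Positive φ → Negative (.neg φ)
    | and {φ ψ : HMLU A} : Negative φ → Negative ψ → Negative (.and φ ψ)
end

/-- Good formulas: every diamond subformula has a positive left-hand side. -/
inductive Good : HMLU A → Prop
  | top : Good .top
  | neg {φ : HMLU A} : Good φ → Good (.neg φ)
  | and {φ ψ : HMLU A} : Good φ → Good ψ → Good (.and φ ψ)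
  | dia {δ ψ : HMLU A} {α : Option A} : Positive δ → Good δ → Good ψ → Good (.dia δ α ψ)

theorem tau_transfer (step : Option A → X → X → Prop)
    (htau : ∀ p : X, step none p p) (p p' : X) (hstep : step none p p') (φ : HMLU A) :
    (Positive φ → Sat step φ p' → Sat step φ p) ∧
    (Negative φ → Sat step φ p → Sat step φ p') := by
  induction φ with
  | top => exact ⟨fun _ _ => trivial, fun _ _ => trivial⟩
  | neg φ ih =>
    refine ⟨fun hpos hs hn => ?_, fun hneg hs hn => ?_⟩
    · cases hpos with
      | neg h => exact hs (ih.2 h hn)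
    · cases hneg with
      | neg h => exact hs (ih.1 h hn)
  | and φ ψ ihφ ihψ =>
    refine ⟨fun hpos hs => ?_, fun hneg hs => ?_⟩
    · cases hpos with
      | and h1 h2 => exact ⟨ihφ.1 h1 hs.1, ihψ.1 h2 hs.2⟩
    · cases hneg with
      | and h1 h2 => exact ⟨ihφ.2 h1 hs.1, ihψ.2 h2 hs.2⟩
  | dia δ α ψ ihδ ihψ =>
    refine ⟨fun hpos hs => ?_, fun hneg => ?_⟩
    · cases hpos with
      | dia hδ =>
        obtain ⟨q, q', hδ', hpath, hstep', hψ⟩ := hs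
        exact ⟨q, q', ihδ.1 hδ hδ', Relation.ReflTransGen.head ⟨hstep, hδ'⟩ hpath,
          hstep', hψ⟩
    · cases hneg
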